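/- arXiv:2308.07684 — 5 statements merged into one kernel-verified Lean document; each statement's English description precedes it below -/
import Mathlib

section
/- Let P be a path in K_n □ K_m given by start vertex v₀ and step array a = [a₁,...,a_ℓ], and let G = ⟨c⟩ with c(a,b)=(a+1,b), n odd. Then P contains at most one edge from each G-edge-orbit if and only if for all 0 ≤ i < j ≤ ℓ-1: (the second coordinate of a_{i+1}+...+a_j is nonzero, or a_{i+1} ≠ a_{j+1}) and (the second coordinate of a_{i+1}+...+a_{j+1} is nonzero, or a_{i+1} ≠ -a_{j+1}). -/
/-!
A translation of the first coordinate fixes second coordinates and difference vectors, and any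
two vertices with equal second coordinates differ by one. So the edges `{v_i, v_{i+1}}` and
`{v_j, v_{j+1}}` share an orbit iff `v_i` has the second coordinate of `v_j` and
`a_{i+1} = a_{j+1}`, or that of `v_{j+1}` and `a_{i+1} = -a_{j+1}`; and `v_j - v_i` is the partial
sum `a_{i+1} + ⋯ + a_j`.
-/

/-- The Cartesian product `K_n □ K_m` on vertex set `ZMod n × ZMod m`: distinct
vertices are adjacent iff they agree in some coordinate. -/
def rook (n m : ℕ) : SimpleGraph (ZMod n × ZMod m) where
  Adj v w := v ≠ w ∧ (v.1 = w.1 ∨ v.2 = w.2)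
  symm := by
    constructor
    rintro v w ⟨h1, h2⟩
    exact ⟨fun h => h1 h.symm, h2.imp Eq.symm Eq.symm⟩
  loopless := by constructor; rintro v ⟨h, -⟩; exact h rfl

/-- The translation `(a, b) ↦ (a + t, b)` on `ZMod n × ZMod m`. -/
def shift (n m : ℕ) (t : ZMod n) : ZMod n × ZMod m → ZMod n × ZMod m :=
  fun v => (v.1 + t, v.2)

/-- The translation `shift n m t` as a graph homomorphism of `rook n m`. -/
def shiftHom (n m : ℕ) (t : ZMod n) : rook n m →g rook n m where
  toFun := shift n m t
  map_rel' := by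
    rintro v w ⟨h1, h2⟩
    constructor
    · intro hc
      apply h1
      have ha := congrArg Prod.fst hc
      have hb := congrArg Prod.snd hc
      simp only [shift] at ha hb
      exact Prod.ext (by exact add_right_cancel ha) hb
    · rcases h2 with h | h
      · exact Or.inl (by simp [shift, h])
      · exact Or.inr (by simp [shift, h])

open Finset in
theorem sum_Icc_one_sub_sum_Icc_one {M : Type*} [AddCommGroup M] (f : ℕ → M) {i j : ℕ}
    (h : i ≤ j) : ∑ g ∈ Icc 1 j, f g - ∑ g ∈ Icc 1 i, f g = ∑ g ∈ Icc (i + 1) j, f g := by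
  have hIcc (k : ℕ) : Icc 1 k = Ioc 0 k := Icc_add_one_left_eq_Ioc 0 k
  rw [sub_eq_iff_eq_add', Icc_add_one_left_eq_Ioc, hIcc, hIcc, sum_Ioc_consecutive f i.zero_le h]

theorem exists_shift_eq_and_shift_eq_iff {n m : ℕ} (x y x' y' : ZMod n × ZMod m) :
    (∃ t, shift n m t x = x' ∧ shift n m t y = y') ↔ x.2 = x'.2 ∧ y - x = y' - x' := by
  simp only [shift, Prod.ext_iff, Prod.fst_sub, Prod.snd_sub]
  constructor
  · rintro ⟨t, ⟨hx1, hx2⟩, hy1, hy2⟩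
    exact ⟨hx2, by linear_combination hy1 - hx1, by linear_combination hy2 - hx2⟩
  · rintro ⟨hx, h1, h2⟩
    exact ⟨x'.1 - x.1, ⟨by ring, hx⟩, by linear_combination h1, by linear_combination h2 + hx⟩

theorem exists_map_shift_eq_iff {n m : ℕ} (x y x' y' : ZMod n × ZMod m) :
    (∃ t, Sym2.map (shift n m t) s(x, y) = s(x', y')) ↔
      (x.2 = x'.2 ∧ y - x = y' - x') ∨ (x.2 = y'.2 ∧ y - x = x' - y') := by
  simp only [Sym2.map_mk, Sym2.eq_iff, exists_or, exists_shift_eq_and_shift_eq_iff]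

open Finset in
theorem path_one_edge_per_orbit_iff_general (n m ℓ : ℕ)
    (v₀ : ZMod n × ZMod m) (a : ℕ → ZMod n × ZMod m) :
    (∀ i j, i < j → j < ℓ → ∀ t : ZMod n,
        Sym2.map (shift n m t)
            s(v₀ + ∑ g ∈ Icc 1 i, a g, v₀ + ∑ g ∈ Icc 1 (i + 1), a g) ≠
          s(v₀ + ∑ g ∈ Icc 1 j, a g, v₀ + ∑ g ∈ Icc 1 (j + 1), a g)) ↔
    (∀ i j, i < j → j < ℓ →
        ((∑ g ∈ Icc (i + 1) j, a g).2 ≠ 0 ∨ a (i + 1) ≠ a (j + 1)) ∧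
        ((∑ g ∈ Icc (i + 1) (j + 1), a g).2 ≠ 0 ∨ a (i + 1) ≠ -a (j + 1))) := by
  have hsub : ∀ i j, i ≤ j →
      (v₀ + ∑ g ∈ Icc 1 j, a g) - (v₀ + ∑ g ∈ Icc 1 i, a g) = ∑ g ∈ Icc (i + 1) j, a g :=
    fun i j h => by rw [add_sub_add_left_eq_sub, sum_Icc_one_sub_sum_Icc_one a h]
  have hsnd : ∀ i j, i ≤ j → ((v₀ + ∑ g ∈ Icc 1 i, a g).2 = (v₀ + ∑ g ∈ Icc 1 j, a g).2 ↔
      (∑ g ∈ Icc (i + 1) j, a g).2 = 0) :=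
    fun i j h => by rw [← hsub i j h, Prod.snd_sub, sub_eq_zero, eq_comm]
  have hstep : ∀ k, (v₀ + ∑ g ∈ Icc 1 (k + 1), a g) - (v₀ + ∑ g ∈ Icc 1 k, a g) = a (k + 1) :=
    fun k => by rw [hsub k (k + 1) k.le_succ, Icc_self, sum_singleton]
  refine forall₄_congr fun i j hij _ => ?_
  rw [← not_exists, exists_map_shift_eq_iff, ← neg_sub (v₀ + ∑ g ∈ Icc 1 (j + 1), a g),
    hstep, hstep, hsnd i j hij.le, hsnd i (j + 1) (by omega)]
  tauto

open Finset in
/-- Let `P` be a path in `K_n □ K_m` with start `v₀` and step array `a₁, …, a_ℓ`,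
and let `G` be the cyclic group generated by `(a,b) ↦ (a+1,b)`, `n` odd.  Then `P`
contains at most one edge from each `G`-edge-orbit iff for all `0 ≤ i < j ≤ ℓ-1`:
(the second coordinate of `a_{i+1}+⋯+a_j` is nonzero or `a_{i+1} ≠ a_{j+1}`) and
(the second coordinate of `a_{i+1}+⋯+a_{j+1}` is nonzero or `a_{i+1} ≠ -a_{j+1}`). -/
theorem path_one_edge_per_orbit_iff (n m ℓ : ℕ) (hn : Odd n)
    (v₀ : ZMod n × ZMod m) (a : ℕ → ZMod n × ZMod m)
    (ha : ∀ g, 1 ≤ g → g ≤ ℓ →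
      ((a g).2 = 0 ∧ (a g).1 ≠ 0) ∨ ((a g).1 = 0 ∧ (a g).2 ≠ 0))
    (hpath : ∀ i j, i ≤ ℓ → j ≤ ℓ →
      v₀ + ∑ g ∈ Icc 1 i, a g = v₀ + ∑ g ∈ Icc 1 j, a g → i = j) :
    (∀ i j, i < j → j < ℓ → ∀ t : ZMod n,
        Sym2.map (shift n m t)
            s(v₀ + ∑ g ∈ Icc 1 i, a g, v₀ + ∑ g ∈ Icc 1 (i + 1), a g) ≠
          s(v₀ + ∑ g ∈ Icc 1 j, a g, v₀ + ∑ g ∈ Icc 1 (j + 1), a g)) ↔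
    (∀ i j, i < j → j < ℓ →
        ((∑ g ∈ Icc (i + 1) j, a g).2 ≠ 0 ∨ a (i + 1) ≠ a (j + 1)) ∧
        ((∑ g ∈ Icc (i + 1) (j + 1), a g).2 ≠ 0 ∨ a (i + 1) ≠ -a (j + 1))) :=
  path_one_edge_per_orbit_iff_general n m ℓ v₀ a
end

section
/- Let n be an odd prime and S_k (1 ≤ k ≤ (n-1)/2) be a stretch of the staircase array over Z_n × Z_n. Then for any 1 ≤ p ≤ q ≤ 2n, the sum of the consecutive entries a_{k,p} through a_{k,q} is nonzero in Z_n × Z_n (i.e., not equal to (0,0)). -/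
def stretchEntry (n k g : ℕ) : ZMod n × ZMod n :=
  if g = 2 * n then (((2 * k : ℕ) : ZMod n), 0)
  else if g % 2 = 1 then (0, ((2 * k - 1 : ℕ) : ZMod n))
  else (((2 * k - 1 : ℕ) : ZMod n), 0)

def staircase (n i : ℕ) : ZMod n × ZMod n :=
  stretchEntry n ((i - 1) / (2 * n) + 1) ((i - 1) % (2 * n) + 1)

/-!
Write `m = 2k - 1` and `P j` for the sum of the first `j` entries of `S_k`. The entries alternate
between `(0, m)` and `(m, 0)`, so `P j = (⌊j/2⌋ m, ⌈j/2⌉ m)` for `j < 2n`, and the last entry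
`(2k, 0)` brings `P (2n)` to `(1, 0)`. A vanishing block sum means `P (p-1) = P q`. Since `m` is a
unit and `⌊j/2⌋ < n`, for `q < 2n` the first coordinates force `q = p` and the second ones then
differ by `m ≠ 0`. For `q = 2n` the second coordinate forces `p - 1 ∈ {0, 2n-1}`, where the first
coordinate reads `0 = 1` or `-m = 1`, i.e. `2k ≡ 0 (mod n)`.
-/

lemma ZMod.natCast_ne_zero_of_pos_of_lt {n x : ℕ} (hx0 : 0 < x) (hxn : x < n) :
    (x : ZMod n) ≠ 0 := by
  rw [Ne, ZMod.natCast_eq_zero_iff]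
  exact fun h => hx0.ne' (Nat.eq_zero_of_dvd_of_lt h hxn)

namespace Staircase

variable {n k : ℕ}

lemma stretchEntry_of_mod_two_eq_one {g : ℕ} (hg : g % 2 = 1) :
    stretchEntry n k g = (0, ((2 * k - 1 : ℕ) : ZMod n)) := by
  simp [stretchEntry, hg, show g ≠ 2 * n by omega]

lemma stretchEntry_of_mod_two_eq_zero {g : ℕ} (hg : g % 2 = 0) (hgn : g ≠ 2 * n) :
    stretchEntry n k g = (((2 * k - 1 : ℕ) : ZMod n), 0) := by
  simp [stretchEntry, hg, hgn]

lemma stretchEntry_two_mul : stretchEntry n k (2 * n) = (((2 * k : ℕ) : ZMod n), 0) := by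
  simp [stretchEntry]

variable (n k) in
def stretchPrefix (j : ℕ) : ZMod n × ZMod n :=
  ∑ g ∈ Finset.Ioc 0 j, stretchEntry n k g

lemma stretchPrefix_of_lt {j : ℕ} (hj : j < 2 * n) :
    stretchPrefix n k j =
      (((j / 2 : ℕ) : ZMod n) * ((2 * k - 1 : ℕ) : ZMod n),
        (((j + 1) / 2 : ℕ) : ZMod n) * ((2 * k - 1 : ℕ) : ZMod n)) := by
  induction j with
  | zero => simp [stretchPrefix, Prod.zero_eq_mk]
  | succ j ih =>
    rw [stretchPrefix, Finset.sum_Ioc_succ_top j.zero_le, ← stretchPrefix, ih (by omega)]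
    rcases Nat.mod_two_eq_zero_or_one j with hj | hj
    · rw [stretchEntry_of_mod_two_eq_one (by omega), show (j + 1) / 2 = j / 2 by omega,
        show (j + 1 + 1) / 2 = j / 2 + 1 by omega]
      simp only [Prod.mk_add_mk, Prod.mk.injEq, Nat.cast_succ]
      constructor <;> ring
    · rw [stretchEntry_of_mod_two_eq_zero (by omega) (by omega),
        show (j + 1) / 2 = j / 2 + 1 by omega, show (j + 1 + 1) / 2 = j / 2 + 1 by omega]
      simp only [Prod.mk_add_mk, Prod.mk.injEq, Nat.cast_succ]
      constructor <;> ring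

lemma stretchPrefix_two_mul (hn : 0 < n) (hk : 1 ≤ k) : stretchPrefix n k (2 * n) = (1, 0) := by
  rw [show 2 * n = (2 * n - 1) + 1 by omega, stretchPrefix,
    Finset.sum_Ioc_succ_top (Nat.zero_le _), ← stretchPrefix, stretchPrefix_of_lt (by omega),
    show 2 * n - 1 + 1 = 2 * n by omega,
    stretchEntry_two_mul, show (2 * n - 1) / 2 = n - 1 by omega, Nat.mul_div_cancel_left n two_pos]
  ext <;> simp [Nat.cast_sub hn, Nat.cast_sub (by omega : 1 ≤ 2 * k)]

lemma stretchPrefix_ne_of_lt_of_lt (hk1 : 1 ≤ k) (hk2 : 2 * k < n)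
    (hm : IsUnit ((2 * k - 1 : ℕ) : ZMod n)) {a b : ℕ} (hab : a < b) (hb : b < 2 * n) :
    stretchPrefix n k a ≠ stretchPrefix n k b := by
  rw [stretchPrefix_of_lt (by omega), stretchPrefix_of_lt hb, Ne, Prod.mk.injEq]
  rintro ⟨hfst, hsnd⟩
  have hhalf : a / 2 = b / 2 :=
    CharP.natCast_injOn_Iio (ZMod n) n (Set.mem_Iio.2 (by omega)) (Set.mem_Iio.2 (by omega))
      (hm.mul_right_cancel hfst)
  rw [show (b + 1) / 2 = (a + 1) / 2 + 1 by omega, Nat.cast_succ, add_one_mul, left_eq_add] at hsnd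
  exact ZMod.natCast_ne_zero_of_pos_of_lt (by omega) (by omega) hsnd

lemma stretchPrefix_ne_two_mul (hk1 : 1 ≤ k) (hk2 : 2 * k < n)
    (hm : IsUnit ((2 * k - 1 : ℕ) : ZMod n)) {a : ℕ} (ha : a < 2 * n) :
    stretchPrefix n k a ≠ stretchPrefix n k (2 * n) := by
  have : Fact (1 < n) := ⟨by omega⟩
  rw [stretchPrefix_of_lt ha, stretchPrefix_two_mul (by omega) hk1, Ne, Prod.mk.injEq]
  rintro ⟨hfst, hsnd⟩
  rw [hm.mul_left_eq_zero] at hsnd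
  by_cases hlast : a = 2 * n - 1
  · rw [hlast, show (2 * n - 1) / 2 = n - 1 by omega, Nat.cast_sub (by omega),
      Nat.cast_sub (by omega), ZMod.natCast_self] at hfst
    exact ZMod.natCast_ne_zero_of_pos_of_lt (by omega) hk2 (by linear_combination -hfst)
  · have hodd : (a + 1) / 2 = 0 := by
      by_contra h
      exact ZMod.natCast_ne_zero_of_pos_of_lt (by omega) (by omega) hsnd
    rw [show a / 2 = 0 by omega, Nat.cast_zero, zero_mul] at hfst
    exact zero_ne_one hfst

lemma stretchPrefix_ne_of_lt (hk1 : 1 ≤ k) (hk2 : 2 * k < n)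
    (hm : IsUnit ((2 * k - 1 : ℕ) : ZMod n)) {a b : ℕ} (hab : a < b) (hb : b ≤ 2 * n) :
    stretchPrefix n k a ≠ stretchPrefix n k b := by
  rcases hb.lt_or_eq with hb | rfl
  · exact stretchPrefix_ne_of_lt_of_lt hk1 hk2 hm hab hb
  · exact stretchPrefix_ne_two_mul hk1 hk2 hm hab

end Staircase

open Staircase

open Finset in
theorem partial_stretch_sum_ne_zero_general (n k p q : ℕ) (hn : n.Prime)
    (hk1 : 1 ≤ k) (hk2 : k ≤ (n - 1) / 2)
    (hp : 1 ≤ p) (hpq : p ≤ q) (hq : q ≤ 2 * n) :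
    ∑ g ∈ Icc p q, stretchEntry n k g ≠ 0 := by
  have h2k : 2 * k < n := by omega
  have hm : IsUnit ((2 * k - 1 : ℕ) : ZMod n) := by
    have := Fact.mk hn
    exact (ZMod.natCast_ne_zero_of_pos_of_lt (by omega) (by omega)).isUnit
  have hsplit :
      stretchPrefix n k (p - 1) + ∑ g ∈ Icc p q, stretchEntry n k g = stretchPrefix n k q := by
    rw [show Icc p q = Ioc (p - 1) q by ext; simp only [mem_Icc, mem_Ioc]; omega]
    exact sum_Ioc_consecutive _ (Nat.zero_le _) (by omega)
  intro hzero
  rw [hzero, add_zero] at hsplit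
  exact stretchPrefix_ne_of_lt hk1 h2k hm (by omega) hq hsplit

open Finset in
/-- For `n` an odd prime, `1 ≤ k ≤ (n-1)/2`, and `1 ≤ p ≤ q ≤ 2n`, the sum of the
consecutive entries `a_{k,p}` through `a_{k,q}` of the stretch `S_k` is nonzero in
`ZMod n × ZMod n`. -/
theorem partial_stretch_sum_ne_zero (n k p q : ℕ) (hn : n.Prime) (ho : Odd n)
    (hk1 : 1 ≤ k) (hk2 : k ≤ (n - 1) / 2)
    (hp : 1 ≤ p) (hpq : p ≤ q) (hq : q ≤ 2 * n) :
    ∑ g ∈ Icc p q, stretchEntry n k g ≠ 0 :=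
  partial_stretch_sum_ne_zero_general n k p q hn hk1 hk2 hp hpq hq
end

section
/- Let n be an odd prime and let a = [a₁,...,a_{n(n-1)}] be the staircase array over Z_n × Z_n. Then for all 0 ≤ i < j ≤ n(n-1) - 1, it holds that: (the second coordinate of a_{i+1}+...+a_j is nonzero or a_{i+1} ≠ a_{j+1}), and (the second coordinate of a_{i+1}+...+a_{j+1} is nonzero or a_{i+1} ≠ -a_{j+1}). Consequently, the path in K_n □ K_n determined by the staircase array contains at most one edge from each edge orbit under the group generated by (a,b) ↦ (a+1,b). -/
/-!
Write a position as `2nk + r` with `r < 2n`. The entry `a_{2nk+r+1}` has natural coordinates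
below `n`: `(0, 2k+1)` for even `r`, `(2k+1, 0)` for odd `r < 2n - 1` and `(2k+2, 0)` for
`r = 2n - 1`.
A full stretch contributes `n(2k+1) ≡ 0` to the second coordinate, so the second coordinate of
the prefix sum of length `2nk + r` is `⌊(r+1)/2⌋ (2k+1)`.
Equal entries lie in one stretch at offsets of equal parity, and the sum between them has second
coordinate `(r' - r)/2 · (2k+1) ≠ 0` because `n` is prime. As `n` is odd, opposite entries can
only be `(2k+1, 0)` and `(2k'+2, 0)` with `2k + 2k' + 3 = n`; exactly one of the two prefix sums
involved then vanishes. A translation `(a, b) ↦ (a + t, b)` carrying one edge of the path onto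
another preserves second coordinates and, up to sign, the step along the edge.
-/

open Finset

theorem sum_Icc_add_one_eq_sub {M : Type*} [AddCommGroup M] (f : ℕ → M) {a b : ℕ}
    (hab : a ≤ b) :
    ∑ g ∈ Icc (a + 1) b, f g = ∑ g ∈ Icc 1 b, f g - ∑ g ∈ Icc 1 a, f g := by
  have hIcc : ∀ c, Icc 1 c = Ioc 0 c := Icc_add_one_left_eq_Ioc 0
  rw [eq_sub_iff_add_eq', Icc_add_one_left_eq_Ioc, hIcc, hIcc,
    sum_Ioc_consecutive f a.zero_le hab]

namespace ZMod

theorem natCast_ne_zero_of_pos_of_lt_s15 {n a : ℕ} (ha : 0 < a) (han : a < n) : (a : ZMod n) ≠ 0 :=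
  fun h => (Nat.lt_irrefl n) ((Nat.le_of_dvd ha ((natCast_eq_zero_iff a n).1 h)).trans_lt han)

theorem natCast_eq_natCast_iff_of_lt {n a b : ℕ} (ha : a < n) (hb : b < n) :
    (a : ZMod n) = b ↔ a = b := by
  rw [natCast_eq_natCast_iff', Nat.mod_eq_of_lt ha, Nat.mod_eq_of_lt hb]

theorem add_eq_zero_or_eq_of_natCast_eq_neg {n a b : ℕ} (ha : a < n) (hb : b < n)
    (h : (a : ZMod n) = -b) : a + b = 0 ∨ a + b = n := by
  have hdvd : n ∣ a + b := (natCast_eq_zero_iff _ _).1 (by push_cast; rw [h, neg_add_cancel])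
  rcases Nat.eq_zero_or_pos (a + b) with h0 | hpos
  · exact Or.inl h0
  · exact Or.inr (Nat.eq_of_dvd_of_lt_two_mul hpos.ne' hdvd (by omega))

theorem natCast_mul_natCast_ne_zero {p a b : ℕ} (hp : p.Prime) (ha : 0 < a) (hap : a < p)
    (hb : 0 < b) (hbp : b < p) : (a : ZMod p) * b ≠ 0 :=
  haveI := Fact.mk hp
  mul_ne_zero (natCast_ne_zero_of_pos_of_lt_s15 ha hap) (natCast_ne_zero_of_pos_of_lt_s15 hb hbp)

end ZMod

/-- Entry `r + 1` of the stretch `S_{k+1}`, lifted to `ℕ × ℕ`. -/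
def stretchCoords (n k r : ℕ) : ℕ × ℕ :=
  if r + 1 = 2 * n then (2 * k + 2, 0)
  else if r % 2 = 0 then (0, 2 * k + 1)
  else (2 * k + 1, 0)

theorem stretchCoords_lt {n k r : ℕ} (hk : 2 * k + 2 < n) :
    (stretchCoords n k r).1 < n ∧ (stretchCoords n k r).2 < n := by
  unfold stretchCoords; split_ifs <;> constructor <;> dsimp only <;> omega

theorem staircase_two_mul_add_succ {n k r : ℕ} (hr : r < 2 * n) :
    staircase n (2 * n * k + r + 1) =
      (((stretchCoords n k r).1 : ZMod n), ((stretchCoords n k r).2 : ZMod n)) := by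
  have h2n : 0 < 2 * n := by omega
  have hdiv : (2 * n * k + r) / (2 * n) = k := by
    rw [Nat.mul_add_div h2n, Nat.div_eq_of_lt hr, add_zero]
  have hmod : (2 * n * k + r) % (2 * n) = r := by
    rw [Nat.mul_add_mod, Nat.mod_eq_of_lt hr]
  rw [staircase, Nat.add_sub_cancel, hdiv, hmod, stretchEntry, stretchCoords]
  split_ifs <;> first | omega | simp [mul_add]

theorem snd_sum_stretch {n k r : ℕ} (hr : r ≤ 2 * n) :
    (∑ g ∈ Icc (2 * n * k + 1) (2 * n * k + r), staircase n g).2 =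
      (((r + 1) / 2 : ℕ) : ZMod n) * ((2 * k + 1 : ℕ) : ZMod n) := by
  induction r with
  | zero => simp
  | succ r ih =>
    rw [← add_assoc, sum_Icc_succ_top (by omega), Prod.snd_add, ih (by omega),
      staircase_two_mul_add_succ (by omega), stretchCoords]
    split_ifs
    · rw [show (r + 1 + 1) / 2 = (r + 1) / 2 by omega]; simp
    · rw [show (r + 1 + 1) / 2 = (r + 1) / 2 + 1 by omega]; push_cast; ring
    · rw [show (r + 1 + 1) / 2 = (r + 1) / 2 by omega]; simp

theorem snd_sum_staircase_two_mul_add {n k r : ℕ} (hr : r ≤ 2 * n) :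
    (∑ g ∈ Icc 1 (2 * n * k + r), staircase n g).2 =
      (((r + 1) / 2 : ℕ) : ZMod n) * ((2 * k + 1 : ℕ) : ZMod n) := by
  have hstart : ∀ l, (∑ g ∈ Icc 1 (2 * n * l), staircase n g).2 = 0 := by
    intro l
    induction l with
    | zero => simp
    | succ l ih =>
      have hfull := snd_sum_stretch (n := n) (k := l) (r := 2 * n) le_rfl
      rw [show (2 * n + 1) / 2 = n by omega, ZMod.natCast_self, zero_mul,
        sum_Icc_add_one_eq_sub _ (by omega), Prod.snd_sub, ih, sub_zero] at hfull
      rwa [mul_add_one]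
  rw [← snd_sum_stretch hr, sum_Icc_add_one_eq_sub _ (Nat.le_add_right (2 * n * k) r),
    Prod.snd_sub, hstart, sub_zero]

theorem exists_eq_two_mul_add_of_lt_mul_pred {n i : ℕ} (ho : Odd n) (hi : i < n * (n - 1)) :
    ∃ k r, i = 2 * n * k + r ∧ r < 2 * n ∧ 2 * k + 2 < n := by
  obtain ⟨w, rfl⟩ := ho
  have h2n : 0 < 2 * (2 * w + 1) := by omega
  refine ⟨i / (2 * (2 * w + 1)), i % (2 * (2 * w + 1)), (Nat.div_add_mod _ _).symm,
    Nat.mod_lt _ h2n, ?_⟩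
  have hi' : i < w * (2 * (2 * w + 1)) := by
    rw [show w * (2 * (2 * w + 1)) = (2 * w + 1) * (2 * w + 1 - 1) by
      rw [Nat.add_sub_cancel]; ring]
    exact hi
  have := (Nat.div_lt_iff_lt_mul h2n).2 hi'
  omega

theorem snd_sum_staircase_ne_zero_of_eq {n i j : ℕ} (hn : n.Prime) (ho : Odd n) (hij : i < j)
    (hj : j < n * (n - 1)) (h : staircase n (i + 1) = staircase n (j + 1)) :
    (∑ g ∈ Icc (i + 1) j, staircase n g).2 ≠ 0 := by
  obtain ⟨kA, rA, rfl, hrA, hkA⟩ := exists_eq_two_mul_add_of_lt_mul_pred ho (hij.trans hj)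
  obtain ⟨kB, rB, rfl, hrB, hkB⟩ := exists_eq_two_mul_add_of_lt_mul_pred ho hj
  obtain ⟨hA₁, hA₂⟩ := stretchCoords_lt (r := rA) hkA
  obtain ⟨hB₁, hB₂⟩ := stretchCoords_lt (r := rB) hkB
  rw [staircase_two_mul_add_succ hrA, staircase_two_mul_add_succ hrB, Prod.mk.injEq,
    ZMod.natCast_eq_natCast_iff_of_lt hA₁ hB₁, ZMod.natCast_eq_natCast_iff_of_lt hA₂ hB₂,
    ← Prod.ext_iff] at h
  obtain rfl : kA = kB := by
    unfold stretchCoords at h; split_ifs at h <;> simp only [Prod.mk.injEq] at h <;> omega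
  have hr : rA < rB ∧ rA % 2 = rB % 2 ∧ rB + 1 < 2 * n := by
    unfold stretchCoords at h; split_ifs at h <;> simp only [Prod.mk.injEq] at h <;> omega
  rw [sum_Icc_add_one_eq_sub _ hij.le, Prod.snd_sub, snd_sum_staircase_two_mul_add hrA.le,
    snd_sum_staircase_two_mul_add hrB.le, ← sub_mul, ← Nat.cast_sub (by omega)]
  exact ZMod.natCast_mul_natCast_ne_zero hn (by omega) (by omega) (by omega) (by omega)

theorem snd_sum_staircase_ne_zero_of_eq_neg {n i j : ℕ} (hn : n.Prime) (ho : Odd n)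
    (hij : i < j) (hj : j < n * (n - 1)) (h : staircase n (i + 1) = -staircase n (j + 1)) :
    (∑ g ∈ Icc (i + 1) (j + 1), staircase n g).2 ≠ 0 := by
  obtain ⟨kA, rA, rfl, hrA, hkA⟩ := exists_eq_two_mul_add_of_lt_mul_pred ho (hij.trans hj)
  obtain ⟨kB, rB, rfl, hrB, hkB⟩ := exists_eq_two_mul_add_of_lt_mul_pred ho hj
  obtain ⟨hA₁, hA₂⟩ := stretchCoords_lt (r := rA) hkA
  obtain ⟨hB₁, hB₂⟩ := stretchCoords_lt (r := rB) hkB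
  rw [staircase_two_mul_add_succ hrA, staircase_two_mul_add_succ hrB, Prod.neg_mk,
    Prod.mk.injEq] at h
  have h₁ := ZMod.add_eq_zero_or_eq_of_natCast_eq_neg hA₁ hB₁ h.1
  have h₂ := ZMod.add_eq_zero_or_eq_of_natCast_eq_neg hA₂ hB₂ h.2
  have hkind : (rA + 1 = 2 * n ∧ rB % 2 = 1 ∧ rB + 1 < 2 * n) ∨
      (rA % 2 = 1 ∧ rA + 1 < 2 * n ∧ rB + 1 = 2 * n) := by
    obtain ⟨w, rfl⟩ := ho
    unfold stretchCoords at h₁ h₂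
    split_ifs at h₁ h₂ <;> simp only [false_or, or_false] at h₁ h₂ <;> omega
  rw [sum_Icc_add_one_eq_sub _ (by omega), Prod.snd_sub, add_assoc,
    snd_sum_staircase_two_mul_add (by omega : rB + 1 ≤ 2 * n),
    snd_sum_staircase_two_mul_add hrA.le]
  rcases hkind with ⟨hA, hB, hB'⟩ | ⟨hA, hA', hB⟩
  · rw [show (rA + 1) / 2 = n by omega, ZMod.natCast_self, zero_mul, sub_zero]
    exact ZMod.natCast_mul_natCast_ne_zero hn (by omega) (by omega) (by omega) (by omega)
  · rw [show (rB + 1 + 1) / 2 = n by omega, ZMod.natCast_self, zero_mul, zero_sub, neg_ne_zero]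
    exact ZMod.natCast_mul_natCast_ne_zero hn (by omega) (by omega) (by omega) (by omega)

theorem shift_sub_shift {n m : ℕ} (t : ZMod n) (u v : ZMod n × ZMod m) :
    shift n m t u - shift n m t v = u - v := by
  simp [shift, Prod.ext_iff]

theorem snd_shift_sub_self {n m : ℕ} (t : ZMod n) (u : ZMod n × ZMod m) :
    (shift n m t u - u).2 = 0 := by
  simp [shift]

theorem sub_eq_or_eq_neg_of_map_shift_eq {n m : ℕ} {t : ZMod n} {u v u' v' : ZMod n × ZMod m}
    (h : Sym2.map (shift n m t) s(u, v) = s(u', v')) :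
    ((u' - u).2 = 0 ∧ v - u = v' - u') ∨ ((v' - u).2 = 0 ∧ v - u = -(v' - u')) := by
  rw [Sym2.map_mk, Sym2.eq_iff] at h
  rcases h with ⟨rfl, rfl⟩ | ⟨rfl, rfl⟩
  · exact Or.inl ⟨snd_shift_sub_self t u, (shift_sub_shift t v u).symm⟩
  · exact Or.inr ⟨snd_shift_sub_self t u, by rw [neg_sub, shift_sub_shift]⟩

theorem map_shift_edge_ne {n m : ℕ} (f : ℕ → ZMod n × ZMod m) (v₀ : ZMod n × ZMod m)
    {i j : ℕ} (hij : i ≤ j) (t : ZMod n)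
    (h₁ : (∑ g ∈ Icc (i + 1) j, f g).2 ≠ 0 ∨ f (i + 1) ≠ f (j + 1))
    (h₂ : (∑ g ∈ Icc (i + 1) (j + 1), f g).2 ≠ 0 ∨ f (i + 1) ≠ -f (j + 1)) :
    Sym2.map (shift n m t) s(v₀ + ∑ g ∈ Icc 1 i, f g, v₀ + ∑ g ∈ Icc 1 (i + 1), f g) ≠
      s(v₀ + ∑ g ∈ Icc 1 j, f g, v₀ + ∑ g ∈ Icc 1 (j + 1), f g) := by
  intro h
  have hstep : ∀ a, ∑ g ∈ Icc 1 (a + 1), f g - ∑ g ∈ Icc 1 a, f g = f (a + 1) := by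
    intro a
    rw [sum_Icc_succ_top (by omega), add_sub_cancel_left]
  rcases sub_eq_or_eq_neg_of_map_shift_eq h with ⟨hsnd, hent⟩ | ⟨hsnd, hent⟩
  · rw [add_sub_add_left_eq_sub, ← sum_Icc_add_one_eq_sub f hij] at hsnd
    simp only [add_sub_add_left_eq_sub, hstep] at hent
    exact h₁.elim (· hsnd) (· hent)
  · rw [add_sub_add_left_eq_sub, ← sum_Icc_add_one_eq_sub f (by omega)] at hsnd
    simp only [add_sub_add_left_eq_sub, hstep] at hent
    exact h₂.elim (· hsnd) (· hent)

theorem staircase_edge_conditions {n i j : ℕ} (hn : n.Prime) (ho : Odd n) (hij : i < j)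
    (hj : j < n * (n - 1)) :
    ((∑ g ∈ Icc (i + 1) j, staircase n g).2 ≠ 0 ∨
        staircase n (i + 1) ≠ staircase n (j + 1)) ∧
      ((∑ g ∈ Icc (i + 1) (j + 1), staircase n g).2 ≠ 0 ∨
        staircase n (i + 1) ≠ -staircase n (j + 1)) :=
  ⟨(not_or_of_imp (snd_sum_staircase_ne_zero_of_eq hn ho hij hj)).symm,
    (not_or_of_imp (snd_sum_staircase_ne_zero_of_eq_neg hn ho hij hj)).symm⟩

open Finset in
/-- For `n` an odd prime and `a` the staircase array, for all `0 ≤ i < j ≤ n(n-1)-1`: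
(the second coordinate of `a_{i+1}+⋯+a_j` is nonzero or `a_{i+1} ≠ a_{j+1}`) and
(the second coordinate of `a_{i+1}+⋯+a_{j+1}` is nonzero or `a_{i+1} ≠ -a_{j+1}`).
Consequently the staircase path in `K_n □ K_n` contains at most one edge from each
edge orbit under the group generated by `(a,b) ↦ (a+1,b)`. -/
theorem staircase_one_edge_per_orbit (n : ℕ) (hn : n.Prime) (ho : Odd n) :
    (∀ i j, i < j → j ≤ n * (n - 1) - 1 →
      ((∑ g ∈ Icc (i + 1) j, staircase n g).2 ≠ 0 ∨
        staircase n (i + 1) ≠ staircase n (j + 1)) ∧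
      ((∑ g ∈ Icc (i + 1) (j + 1), staircase n g).2 ≠ 0 ∨
        staircase n (i + 1) ≠ -staircase n (j + 1))) ∧
    (∀ v₀ : ZMod n × ZMod n, ∀ i j, i < j → j < n * (n - 1) → ∀ t : ZMod n,
      Sym2.map (shift n n t)
          s(v₀ + ∑ g ∈ Icc 1 i, staircase n g,
            v₀ + ∑ g ∈ Icc 1 (i + 1), staircase n g) ≠
        s(v₀ + ∑ g ∈ Icc 1 j, staircase n g,
          v₀ + ∑ g ∈ Icc 1 (j + 1), staircase n g)) := by
  have hpos : 0 < n * (n - 1) := Nat.mul_pos hn.pos (by have := hn.two_le; omega)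
  refine ⟨fun i j hij hj => staircase_edge_conditions hn ho hij (Nat.lt_of_le_pred hpos hj),
    fun v₀ i j hij hj t => ?_⟩
  obtain ⟨h₁, h₂⟩ := staircase_edge_conditions hn ho hij hj
  exact map_shift_edge_ne _ v₀ hij.le t h₁ h₂
end

section
/- For every odd prime n, the graph K_n □ K_n admits a decomposition into n paths, each of length n(n-1), that is transitive under the cyclic group of order n acting by (a,b) ↦ (a+1,b) on the vertex set Z_n × Z_n. -/
/-!
Put `h = (n - 1) / 2`. The path consists of `n h` steps. Step `k` lies in block
`b = ⌊k / n⌋ + 1 ∈ [1, h]` and in row `r = k b`: it runs horizontally in row `r` from column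
`2r - b` (one further right at the start of a block, where `r = 0`) to column `2r + b`, then
vertically in that column to row `r + b`, where the next step starts. As `b` is invertible
modulo the prime `n`, the pair `(b, r)` determines `k`. Hence no vertex repeats, and no two edges
of the `n` translates `(a, b) ↦ (a + t, b)` of the path coincide: a horizontal edge determines
its row and its column difference `±2b` (`±(2b - 1)` in row `0`), a vertical edge the pair of rows
`{r, r + b}`. The translates have `n · n(n - 1)` edges in total, which is the number of edges of
`K_n □ K_n`, so they partition its edge set.
-/

open SimpleGraph

namespace SimpleGraph

variable {V : Type*} {G : SimpleGraph V}

def Copy.pathOfFn (f : ℕ → V) (L : ℕ) (hadj : ∀ j < L, G.Adj (f j) (f (j + 1)))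
    (hinj : Set.InjOn f (Set.Iic L)) : Copy (pathGraph (L + 1)) G where
  toHom.toFun i := f i
  toHom.map_rel' {i i'} h := by
    rcases pathGraph_adj.1 h with h | h
    · rw [← h]
      exact hadj i (by omega)
    · rw [← h]
      exact (hadj i' (by omega)).symm
  injective' i i' h := Fin.ext (hinj (Nat.lt_succ_iff.1 i.isLt) (Nat.lt_succ_iff.1 i'.isLt) h)

lemma Copy.mem_edgeSet_toSubgraph_pathOfFn {f : ℕ → V} {L : ℕ}
    {hadj : ∀ j < L, G.Adj (f j) (f (j + 1))} {hinj : Set.InjOn f (Set.Iic L)} {e : Sym2 V} :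
    e ∈ (pathOfFn f L hadj hinj).toSubgraph.edgeSet ↔ ∃ j < L, e = s(f j, f (j + 1)) := by
  rw [Subgraph.edgeSet_map, Subgraph.edgeSet_top]
  constructor
  · rintro ⟨e, he, rfl⟩
    induction e using Sym2.ind with
    | _ i i' =>
      rcases pathGraph_adj.1 ((mem_edgeSet _).1 he) with h | h
      · exact ⟨i, by omega, by simp [pathOfFn, ← h]⟩
      · exact ⟨i', by omega, by simp [pathOfFn, ← h, Sym2.eq_swap]⟩
  · rintro ⟨j, hj, rfl⟩
    exact ⟨s(⟨j, by omega⟩, ⟨j + 1, by omega⟩), pathGraph_adj.2 (Or.inl rfl),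
      by simp [pathOfFn]⟩

lemma Copy.map_toSubgraph {W X : Type*} {A : SimpleGraph W} {B : SimpleGraph X}
    {f : Copy A G} {f' : Copy A B} {g : G →g B} (h : ∀ a, g (f a) = f' a) :
    f.toSubgraph.map g = f'.toSubgraph := by
  rw [Copy.toSubgraph, ← Subgraph.map_comp]
  congr 1
  ext a
  exact h a

end SimpleGraph

lemma ZMod.natCast_ne_natCast_of_lt_of_lt {n u e : ℕ} (h₁ : e < u) (h₂ : u < n + e) :
    (u : ZMod n) ≠ e := by
  intro h
  have hdvd : n ∣ u - e :=
    (Nat.modEq_iff_dvd' h₁.le).1 ((ZMod.natCast_eq_natCast_iff _ _ _).1 h).symm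
  have := Nat.eq_zero_of_dvd_of_lt hdvd (by omega)
  omega

lemma rook_eq_boxProd (n m : ℕ) :
    rook n m = completeGraph (ZMod n) □ completeGraph (ZMod m) := by
  ext v w
  simp only [rook, boxProd_adj, top_adj, ne_eq, Prod.ext_iff]
  tauto

lemma two_mul_card_edgeSet_rook (n m : ℕ) [NeZero n] [NeZero m] :
    2 * Nat.card (rook n m).edgeSet = n * m * (n - 1 + (m - 1)) := by
  classical
  rw [rook_eq_boxProd, Nat.card_eq_fintype_card, ← edgeFinset_card,
    ← sum_degrees_eq_twice_card_edges]
  simp [degree_boxProd, ZMod.card]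

namespace RookPath

def block (n k : ℕ) : ℕ := k / n + 1

def row (n k : ℕ) : ZMod n := k * block n k

def corner (n k : ℕ) : ZMod n := if n ∣ k then 1 else 0

def col (n k : ℕ) : ZMod n := 2 * row n k - block n k + corner n k

/-- Vertex `2k` is the start `(col n k, row n k)` of step `k`, and vertex `2k + 1` its turning
point `(col n (k + 1), row n k)`; the whole path is translated by `(t, 0)`. -/
def vertex (n : ℕ) (t : ZMod n) (j : ℕ) : ZMod n × ZMod n :=
  (col n ((j + 1) / 2) + t, row n (j / 2))

section Recurrences

variable {n k : ℕ}

lemma block_succ_of_dvd (h : n ∣ k + 1) : block n (k + 1) = block n k + 1 := by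
  simp [block, Nat.succ_div_of_dvd h]

lemma block_succ_of_not_dvd (h : ¬n ∣ k + 1) : block n (k + 1) = block n k := by
  simp [block, Nat.succ_div_of_not_dvd h]

lemma row_succ : row n (k + 1) = row n k + block n k := by
  by_cases h : n ∣ k + 1
  · have hk : ((k + 1 : ℕ) : ZMod n) = 0 := (ZMod.natCast_eq_zero_iff _ _).2 h
    push_cast at hk
    simp only [row, Nat.cast_succ, hk, zero_mul]
    linear_combination -(block n k : ZMod n) * hk
  · simp only [row, block_succ_of_not_dvd h]
    push_cast
    ring

lemma col_succ : col n (k + 1) = 2 * row n k + block n k := by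
  by_cases h : n ∣ k + 1
  · have hk : ((k + 1 : ℕ) : ZMod n) = 0 := (ZMod.natCast_eq_zero_iff _ _).2 h
    push_cast at hk
    simp only [col, corner, block_succ_of_dvd h, if_pos h, row, Nat.cast_succ]
    linear_combination 2 * hk
  · simp only [col, corner, row_succ, block_succ_of_not_dvd h, if_neg h]
    ring

variable {t : ZMod n}

lemma vertex_two_mul : vertex n t (2 * k) = (col n k + t, row n k) := by
  simp only [vertex]
  congr 3 <;> omega

lemma vertex_two_mul_add_one :
    vertex n t (2 * k + 1) = (2 * row n k + block n k + t, row n k) := by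
  simp only [vertex, show (2 * k + 1 + 1) / 2 = k + 1 by omega,
    show (2 * k + 1) / 2 = k by omega, col_succ]

lemma vertex_two_mul_add_two :
    vertex n t (2 * k + 2) = (2 * row n k + block n k + t, row n k + block n k) := by
  rw [show 2 * k + 2 = 2 * (k + 1) by ring, vertex_two_mul, col_succ, row_succ]

lemma shift_vertex (s : ZMod n) (j : ℕ) : shift n n s (vertex n t j) = vertex n (t + s) j := by
  simp only [shift, vertex, add_assoc]

end Recurrences


section Bounds

variable {n k k' : ℕ}

lemma one_le_block : 1 ≤ block n k := Nat.le_add_left 1 _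

lemma block_le (hk : k ≤ n * (n / 2)) : block n k ≤ n / 2 + 1 :=
  Nat.succ_le_succ (Nat.div_le_of_le_mul hk)

lemma block_le_half (hk : k < n * (n / 2)) : block n k ≤ n / 2 :=
  Nat.div_lt_of_lt_mul hk

variable [Fact n.Prime] (ho : Odd n)
include ho

lemma three_le : 3 ≤ n := by
  have := (Fact.out : n.Prime).two_le
  have := Nat.two_mul_div_two_add_one_of_odd ho
  omega

omit [Fact n.Prime] in
lemma mul_sub_one_eq_two_mul : n * (n - 1) = 2 * (n * (n / 2)) := by
  have := Nat.two_mul_div_two_add_one_of_odd ho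
  rw [show n - 1 = 2 * (n / 2) by omega]
  ring

lemma block_ne_zero (hk : k ≤ n * (n / 2)) : (block n k : ZMod n) ≠ 0 := by
  have := block_le hk
  have := three_le ho
  have := Nat.two_mul_div_two_add_one_of_odd ho
  exact_mod_cast ZMod.natCast_ne_natCast_of_lt_of_lt (n := n) (e := 0) one_le_block (by omega)

lemma zmod_two_ne_zero : (2 : ZMod n) ≠ 0 := by
  exact_mod_cast ZMod.natCast_ne_natCast_of_lt_of_lt (n := n) (u := 2) (e := 0) (by omega)
    (by have := three_le ho; omega)

lemma row_eq_zero_iff (hk : k ≤ n * (n / 2)) : row n k = 0 ↔ n ∣ k := by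
  rw [row, mul_eq_zero, or_iff_left (block_ne_zero ho hk), ZMod.natCast_eq_zero_iff]

lemma corner_eq_of_row_eq (hk : k ≤ n * (n / 2)) (hk' : k' ≤ n * (n / 2))
    (hr : row n k = row n k') : corner n k = corner n k' := by
  simp only [corner, ← row_eq_zero_iff ho hk, ← row_eq_zero_iff ho hk', hr]

lemma eq_of_block_eq_of_row_eq (hk : k ≤ n * (n / 2)) (hk' : k' ≤ n * (n / 2))
    (hb : (block n k : ZMod n) = block n k') (hr : row n k = row n k') : k = k' := by
  have := three_le ho
  have := Nat.two_mul_div_two_add_one_of_odd ho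
  have h₁ := block_le hk
  have h₂ := block_le hk'
  have hb' : block n k = block n k' := by
    rwa [ZMod.natCast_eq_natCast_iff', Nat.mod_eq_of_lt (a := block n k) (by omega),
      Nat.mod_eq_of_lt (a := block n k') (by omega)] at hb
  rw [row, row, hb] at hr
  have hmod := (ZMod.natCast_eq_natCast_iff' _ _ _).1
    (mul_right_cancel₀ (hb ▸ block_ne_zero ho hk) hr)
  have hdiv : k / n = k' / n := by unfold block at hb'; omega
  rw [← Nat.div_add_mod k n, ← Nat.div_add_mod k' n, hdiv, hmod]

lemma block_add_block_ne (hk : k ≤ n * (n / 2)) (hk' : k' < n * (n / 2)) :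
    (block n k : ZMod n) + block n k' ≠ corner n k := by
  have := Nat.two_mul_div_two_add_one_of_odd ho
  have := block_le_half hk'
  have : 1 ≤ block n k := one_le_block
  have : 1 ≤ block n k' := one_le_block
  by_cases h : n ∣ k
  · have := block_le hk
    rw [corner, if_pos h]
    exact_mod_cast ZMod.natCast_ne_natCast_of_lt_of_lt (n := n) (e := 1) (by omega) (by omega)
  · have := block_le_half (lt_of_le_of_ne hk (by rintro rfl; exact h (dvd_mul_right _ _)))
    rw [corner, if_neg h]
    exact_mod_cast ZMod.natCast_ne_natCast_of_lt_of_lt (n := n) (e := 0) (by omega) (by omega)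

lemma block_add_block_ne_zero (hk : k < n * (n / 2)) (hk' : k' < n * (n / 2)) :
    (block n k : ZMod n) + block n k' ≠ 0 := by
  have := Nat.two_mul_div_two_add_one_of_odd ho
  have := block_le_half hk
  have := block_le_half hk'
  have : 1 ≤ block n k := one_le_block
  exact_mod_cast ZMod.natCast_ne_natCast_of_lt_of_lt (n := n) (e := 0) (by omega) (by omega)

end Bounds


section Path

variable {n : ℕ} [Fact n.Prime] (ho : Odd n) {k k' : ℕ} {t t' : ZMod n}
include ho

lemma vertex_adj {j : ℕ} (hj : j < n * (n - 1)) :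
    (rook n n).Adj (vertex n t j) (vertex n t (j + 1)) := by
  rw [mul_sub_one_eq_two_mul ho] at hj
  obtain ⟨k, rfl | rfl⟩ := Nat.even_or_odd' j
  · rw [vertex_two_mul, vertex_two_mul_add_one]
    refine ⟨fun h => ?_, Or.inr rfl⟩
    have h₁ := (Prod.mk_inj.1 h).1
    unfold col at h₁
    exact block_add_block_ne ho (k := k) (k' := k) (by omega) (by omega)
      (by linear_combination -h₁)
  · rw [vertex_two_mul_add_one, vertex_two_mul_add_two]
    refine ⟨fun h => block_ne_zero ho (k := k) (by omega) ?_, Or.inl rfl⟩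
    linear_combination -(Prod.mk_inj.1 h).2

lemma vertex_two_mul_ne (hk : k ≤ n * (n / 2)) (hk' : k' < n * (n / 2)) :
    vertex n t (2 * k) ≠ vertex n t (2 * k' + 1) := by
  rw [vertex_two_mul, vertex_two_mul_add_one]
  intro h
  obtain ⟨h₁, h₂⟩ := Prod.mk_inj.1 h
  apply block_add_block_ne ho hk hk'
  unfold col at h₁
  linear_combination h₂ * 2 - h₁

lemma vertex_injOn : Set.InjOn (vertex n t) (Set.Iic (n * (n - 1))) := by
  intro j hj j' hj' h
  simp only [Set.mem_Iic, mul_sub_one_eq_two_mul ho] at hj hj'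
  obtain ⟨k, rfl | rfl⟩ := Nat.even_or_odd' j <;>
    obtain ⟨k', rfl | rfl⟩ := Nat.even_or_odd' j'
  · rw [vertex_two_mul, vertex_two_mul] at h
    obtain ⟨h₁, h₂⟩ := Prod.mk_inj.1 h
    have hε := corner_eq_of_row_eq ho (by omega) (by omega) h₂
    have := eq_of_block_eq_of_row_eq ho (by omega) (by omega)
      (by unfold col at h₁; linear_combination 2 * h₂ - h₁ + hε) h₂
    omega
  · exact absurd h (vertex_two_mul_ne ho (by omega) (by omega))
  · exact absurd h.symm (vertex_two_mul_ne ho (by omega) (by omega))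
  · rw [vertex_two_mul_add_one, vertex_two_mul_add_one] at h
    obtain ⟨h₁, h₂⟩ := Prod.mk_inj.1 h
    have := eq_of_block_eq_of_row_eq ho (by omega) (by omega)
      (by linear_combination h₁ - 2 * h₂) h₂
    omega

end Path


section Edges

variable {n : ℕ} [Fact n.Prime] (ho : Odd n) {k k' : ℕ} {t t' : ZMod n}
include ho

lemma eq_of_horizontal_edge_eq (hk : k < n * (n / 2)) (hk' : k' < n * (n / 2))
    (h : s(vertex n t (2 * k), vertex n t (2 * k + 1)) =
      s(vertex n t' (2 * k'), vertex n t' (2 * k' + 1))) : t = t' ∧ k = k' := by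
  simp only [vertex_two_mul, vertex_two_mul_add_one, Sym2.eq_iff, Prod.mk_inj] at h
  rcases h with ⟨⟨h₁, hr⟩, h₂, -⟩ | ⟨⟨h₁, hr⟩, h₂, -⟩ <;>
    have hε := corner_eq_of_row_eq ho hk.le hk'.le hr <;> unfold col at h₁
  · have hb : (block n k : ZMod n) = block n k' :=
      mul_left_cancel₀ (zmod_two_ne_zero ho) (by linear_combination h₂ - h₁ + hε)
    obtain rfl := eq_of_block_eq_of_row_eq ho hk.le hk'.le hb hr
    exact ⟨by linear_combination h₁, rfl⟩
  · unfold col at h₂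
    refine absurd (mul_left_cancel₀ (zmod_two_ne_zero ho) ?_) (block_add_block_ne ho hk.le hk')
    linear_combination h₂ - h₁ - hε

lemma eq_of_vertical_edge_eq (hk : k < n * (n / 2)) (hk' : k' < n * (n / 2))
    (h : s(vertex n t (2 * k + 1), vertex n t (2 * k + 2)) =
      s(vertex n t' (2 * k' + 1), vertex n t' (2 * k' + 2))) : t = t' ∧ k = k' := by
  simp only [vertex_two_mul_add_one, vertex_two_mul_add_two, Sym2.eq_iff, Prod.mk_inj] at h
  rcases h with ⟨⟨h₁, hr⟩, -, hr'⟩ | ⟨⟨-, hr⟩, -, hr'⟩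
  · obtain rfl := eq_of_block_eq_of_row_eq ho hk.le hk'.le
      (by linear_combination hr' - hr) hr
    exact ⟨by linear_combination h₁, rfl⟩
  · exact absurd (by linear_combination hr' - hr) (block_add_block_ne_zero ho hk hk')

lemma horizontal_edge_ne_vertical_edge (hk' : k' < n * (n / 2)) :
    s(vertex n t (2 * k), vertex n t (2 * k + 1)) ≠
      s(vertex n t' (2 * k' + 1), vertex n t' (2 * k' + 2)) := by
  simp only [vertex_two_mul, vertex_two_mul_add_one, vertex_two_mul_add_two, ne_eq,
    Sym2.eq_iff, Prod.mk_inj]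
  rintro (⟨⟨-, hr⟩, -, hr'⟩ | ⟨⟨-, hr'⟩, -, hr⟩) <;>
    exact block_ne_zero ho hk'.le (by linear_combination hr - hr')

lemma eq_of_edge_eq {j j' : ℕ} (hj : j < n * (n - 1)) (hj' : j' < n * (n - 1))
    (h : s(vertex n t j, vertex n t (j + 1)) = s(vertex n t' j', vertex n t' (j' + 1))) :
    t = t' ∧ j = j' := by
  rw [mul_sub_one_eq_two_mul ho] at hj hj'
  obtain ⟨k, rfl | rfl⟩ := Nat.even_or_odd' j <;>
    obtain ⟨k', rfl | rfl⟩ := Nat.even_or_odd' j'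
  · obtain ⟨rfl, rfl⟩ := eq_of_horizontal_edge_eq ho (by omega) (by omega) h
    exact ⟨rfl, rfl⟩
  · exact absurd h (horizontal_edge_ne_vertical_edge ho (by omega))
  · exact absurd h.symm (horizontal_edge_ne_vertical_edge ho (by omega))
  · obtain ⟨rfl, rfl⟩ := eq_of_vertical_edge_eq ho (by omega) (by omega) h
    exact ⟨rfl, rfl⟩

end Edges


section Decomposition

variable {n : ℕ} [Fact n.Prime] (ho : Odd n)
include ho

def pathCopy (t : ZMod n) : Copy (pathGraph (n * (n - 1) + 1)) (rook n n) :=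
  .pathOfFn (vertex n t) _ (fun _ => vertex_adj ho) (vertex_injOn ho)

lemma existsUnique_mem_edgeSet_pathCopy {e : Sym2 (ZMod n × ZMod n)}
    (he : e ∈ (rook n n).edgeSet) : ∃! t, e ∈ (pathCopy ho t).toSubgraph.edgeSet := by
  simp only [pathCopy, Copy.mem_edgeSet_toSubgraph_pathOfFn]
  let edge (p : ZMod n × Fin (n * (n - 1))) : (rook n n).edgeSet :=
    ⟨s(vertex n p.1 p.2, vertex n p.1 (p.2 + 1)), vertex_adj ho p.2.isLt⟩
  have hinj : Function.Injective edge := fun p p' h => by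
    obtain ⟨ht, hj⟩ := eq_of_edge_eq ho p.2.isLt p'.2.isLt (congrArg Subtype.val h)
    exact Prod.ext ht (Fin.ext hj)
  have hcard : Nat.card (ZMod n × Fin (n * (n - 1))) = Nat.card (rook n n).edgeSet := by
    refine Nat.eq_of_mul_eq_mul_left two_pos ?_
    rw [two_mul_card_edgeSet_rook, Nat.card_prod, Nat.card_zmod, Nat.card_fin, ← two_mul]
    ring
  have hsurj := ((Nat.bijective_iff_injective_and_card edge).2 ⟨hinj, hcard⟩).2
  obtain ⟨⟨t, j⟩, hp⟩ := hsurj ⟨e, he⟩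
  refine ⟨t, ⟨j, j.isLt, (congrArg Subtype.val hp).symm⟩, ?_⟩
  rintro t' ⟨j', hj', rfl⟩
  exact (eq_of_edge_eq ho hj' j.isLt (congrArg Subtype.val hp).symm).1

lemma injective_toSubgraph_pathCopy : Function.Injective fun t => (pathCopy ho t).toSubgraph := by
  intro t t' (h : (pathCopy ho t).toSubgraph = (pathCopy ho t').toSubgraph)
  have hL : 0 < n * (n - 1) := by
    have := three_le ho
    exact Nat.mul_pos (by omega) (by omega)
  have he : s(vertex n t 0, vertex n t (0 + 1)) ∈ (pathCopy ho t).toSubgraph.edgeSet :=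
    Copy.mem_edgeSet_toSubgraph_pathOfFn.2 ⟨0, hL, rfl⟩
  exact (existsUnique_mem_edgeSet_pathCopy ho (vertex_adj ho hL)).unique he (h ▸ he)

lemma map_shiftHom_pathCopy (s t : ZMod n) :
    (pathCopy ho t).toSubgraph.map (shiftHom n n s) = (pathCopy ho (t + s)).toSubgraph :=
  Copy.map_toSubgraph fun i => shift_vertex s i

end Decomposition

end RookPath

open SimpleGraph in
/-- For every odd prime `n`, the graph `K_n □ K_n` admits a decomposition into `n`
paths, each of length `n(n-1)` (so with `n(n-1)+1` vertices), that is transitive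
under the cyclic group of order `n` acting by `(a,b) ↦ (a+1,b)`. -/
theorem transitive_path_decomposition (n : ℕ) (hn : n.Prime) (ho : Odd n) :
    ∃ D : Finset ((rook n n).Subgraph),
      D.card = n ∧
      (∀ B ∈ D, Nonempty (B.coe ≃g pathGraph (n * (n - 1) + 1))) ∧
      (∀ e ∈ (rook n n).edgeSet, ∃! B, B ∈ D ∧ e ∈ B.edgeSet) ∧
      (∀ t : ZMod n, ∀ B ∈ D, B.map (shiftHom n n t) ∈ D) ∧
      (∀ B ∈ D, ∀ C ∈ D, ∃ t : ZMod n, B.map (shiftHom n n t) = C) := by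
  have := Fact.mk hn
  classical
  let P (t : ZMod n) : (rook n n).Subgraph := (RookPath.pathCopy ho t).toSubgraph
  have hP : Function.Injective P := RookPath.injective_toSubgraph_pathCopy ho
  refine ⟨Finset.univ.image P, ?_, ?_, ?_, ?_, ?_⟩
  · rw [Finset.card_image_of_injective _ hP, Finset.card_univ, ZMod.card]
  · simp only [Finset.mem_image, Finset.mem_univ, true_and, forall_exists_index]
    rintro _ t rfl
    exact ⟨(RookPath.pathCopy ho t).isoToSubgraph.symm⟩
  · intro e he
    obtain ⟨t, ht, huniq⟩ := RookPath.existsUnique_mem_edgeSet_pathCopy ho he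
    refine ⟨P t, ⟨Finset.mem_image_of_mem _ (Finset.mem_univ t), ht⟩, ?_⟩
    rintro _ ⟨hB, he'⟩
    obtain ⟨t', -, rfl⟩ := Finset.mem_image.1 hB
    rw [huniq t' he']
  · rintro s _ hB
    obtain ⟨t, -, rfl⟩ := Finset.mem_image.1 hB
    rw [RookPath.map_shiftHom_pathCopy]
    exact Finset.mem_image_of_mem _ (Finset.mem_univ _)
  · rintro _ hB _ hC
    obtain ⟨t, -, rfl⟩ := Finset.mem_image.1 hB
    obtain ⟨t', -, rfl⟩ := Finset.mem_image.1 hC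
    exact ⟨t' - t, by rw [RookPath.map_shiftHom_pathCopy, add_sub_cancel]⟩
end

section
/- Let n be an odd prime, n ≥ 5, let 1 ≤ k < k' ≤ (n-1)/2 with k' = k + 1 + m, m ≥ 0. For any 1 ≤ p ≤ 2n and 1 ≤ q ≤ 2n-1, the element of Z_n × Z_n given by (sum of entries p..2n of stretch S_k) + m·(1,0) + (sum of entries 1..q of stretch S_{k'}) is nonzero. -/
open Finset

def stretchDiff (n k g : ℕ) : ZMod n := (stretchEntry n k g).1 - (stretchEntry n k g).2

lemma fst_sub_snd_sum_stretchEntry (n k : ℕ) (s : Finset ℕ) :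
    (∑ g ∈ s, stretchEntry n k g).1 - (∑ g ∈ s, stretchEntry n k g).2 =
      ∑ g ∈ s, stretchDiff n k g := by
  simp only [stretchDiff, Prod.fst_sum, Prod.snd_sum, sum_sub_distrib]

lemma stretchDiff_of_ne {n k g : ℕ} (hg : g ≠ 2 * n) :
    stretchDiff n k g =
      if g % 2 = 1 then -((2 * k - 1 : ℕ) : ZMod n) else ((2 * k - 1 : ℕ) : ZMod n) := by
  simp only [stretchDiff, stretchEntry, if_neg hg]
  split_ifs <;> simp

lemma sum_Icc_one_stretchDiff {n k q : ℕ} (hq : q < 2 * n) :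
    ∑ g ∈ Icc 1 q, stretchDiff n k g = if q % 2 = 1 then -((2 * k - 1 : ℕ) : ZMod n) else 0 := by
  induction q with
  | zero => simp
  | succ q ih =>
    rw [sum_Icc_succ_top (by omega), ih (by omega), stretchDiff_of_ne (by omega)]
    rcases Nat.mod_two_eq_zero_or_one q with h | h <;>
      simp [h, Nat.succ_mod_two_eq_one_iff.mpr, Nat.succ_mod_two_eq_zero_iff.mpr]

lemma sum_Icc_one_two_mul_stretchDiff {n k : ℕ} (hn : 0 < n) (hk : 1 ≤ k) :
    ∑ g ∈ Icc 1 (2 * n), stretchDiff n k g = 1 := by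
  obtain ⟨r, hr⟩ : ∃ r, 2 * n = r + 1 := ⟨2 * n - 1, by omega⟩
  rw [hr, sum_Icc_succ_top (by omega), sum_Icc_one_stretchDiff (by omega), if_pos (by omega), ← hr]
  simp [stretchDiff, stretchEntry, Nat.cast_sub (by omega : 1 ≤ 2 * k)]

lemma sum_Icc_two_mul_stretchDiff {n k p : ℕ} (hk : 1 ≤ k) (hp1 : 1 ≤ p) (hp2 : p ≤ 2 * n) :
    ∑ g ∈ Icc p (2 * n), stretchDiff n k g =
      1 + if p % 2 = 0 then ((2 * k - 1 : ℕ) : ZMod n) else 0 := by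
  obtain ⟨r, rfl⟩ : ∃ r, p = r + 1 := ⟨p - 1, by omega⟩
  have hsplit := sum_Ioc_consecutive (stretchDiff n k) (Nat.zero_le r) (by omega : r ≤ 2 * n)
  rw [← Icc_add_one_left_eq_Ioc, ← Icc_add_one_left_eq_Ioc, ← Icc_add_one_left_eq_Ioc, zero_add,
    sum_Icc_one_two_mul_stretchDiff (by omega) hk, sum_Icc_one_stretchDiff (by omega)] at hsplit
  rw [eq_sub_of_add_eq' hsplit]
  rcases Nat.mod_two_eq_zero_or_one r with h | h <;>
    simp [h, Nat.succ_mod_two_eq_one_iff.mpr, Nat.succ_mod_two_eq_zero_iff.mpr]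

lemma natCast_ne_zero_of_pos_of_lt {a n : ℕ} (h0 : 0 < a) (h : a < n) : (a : ZMod n) ≠ 0 := by
  rw [Ne, ZMod.natCast_eq_zero_iff]
  exact Nat.not_dvd_of_pos_of_lt h0 h

open Finset in
theorem cross_stretch_sum_ne_zero_general (n k m p q : ℕ)
    (hk : 1 ≤ k) (hk' : k + 1 + m ≤ (n - 1) / 2)
    (hp1 : 1 ≤ p) (hp2 : p ≤ 2 * n) (hq2 : q ≤ 2 * n - 1) :
    (∑ g ∈ Icc p (2 * n), stretchEntry n k g) + ((m : ZMod n), (0 : ZMod n)) +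
        ∑ g ∈ Icc 1 q, stretchEntry n (k + 1 + m) g ≠ 0 := by
  intro hsum
  have hdiff := congrArg (fun x : ZMod n × ZMod n => x.1 - x.2) hsum
  simp only [Prod.fst_add, Prod.snd_add, add_sub_add_comm, fst_sub_snd_sum_stretchEntry,
    sum_Icc_two_mul_stretchDiff hk hp1 hp2, sum_Icc_one_stretchDiff (by omega : q < 2 * n),
    Prod.fst_zero, Prod.snd_zero, sub_zero] at hdiff
  have key : ((m + 1 : ℕ) : ZMod n) = 0 ∨ ((2 * k + m : ℕ) : ZMod n) = 0 := by
    push_cast [Nat.cast_sub (by omega : 1 ≤ 2 * k), Nat.cast_sub (by omega : 1 ≤ 2 * (k + 1 + m))]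
      at hdiff ⊢
    rcases Nat.mod_two_eq_zero_or_one p with hp | hp <;>
      rcases Nat.mod_two_eq_zero_or_one q with hq | hq <;>
      simp only [hp, hq, zero_ne_one, one_ne_zero, if_true, if_false, add_zero] at hdiff
    · exact Or.inr (by linear_combination hdiff)
    · exact Or.inl (by linear_combination -hdiff)
    · exact Or.inl (by linear_combination hdiff)
    · exact Or.inr (by linear_combination -hdiff)
  rcases key with h0 | h0 <;> exact natCast_ne_zero_of_pos_of_lt (by omega) (by omega) h0

open Finset in
/-- Key inequality across two distinct stretches: for `n` an odd prime with `n ≥ 5`,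
`1 ≤ k` and `k' = k + 1 + m ≤ (n-1)/2`, `1 ≤ p ≤ 2n` and `1 ≤ q ≤ 2n - 1`, the sum
`(Σ_{g=p}^{2n} a_{k,g}) + m·(1,0) + (Σ_{g=1}^{q} a_{k',g})` is nonzero
in `ZMod n × ZMod n`. -/
theorem cross_stretch_sum_ne_zero (n k m p q : ℕ) (hn : n.Prime) (ho : Odd n)
    (h5 : 5 ≤ n) (hk : 1 ≤ k) (hk' : k + 1 + m ≤ (n - 1) / 2)
    (hp1 : 1 ≤ p) (hp2 : p ≤ 2 * n) (hq1 : 1 ≤ q) (hq2 : q ≤ 2 * n - 1) :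
    (∑ g ∈ Icc p (2 * n), stretchEntry n k g) + ((m : ZMod n), (0 : ZMod n)) +
        ∑ g ∈ Icc 1 q, stretchEntry n (k + 1 + m) g ≠ 0 :=
  cross_stretch_sum_ne_zero_general n k m p q hk hk' hp1 hp2 hq2
end
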